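/- Let G be a Hermitian matrix and let P(G) denote the matrix obtained by replacing each negative eigenvalue of G with 0 in its spectral decomposition. Then P(G) is the Frobenius-nearest positive semidefinite matrix to G: for every PSD matrix H, ‖G - P(G)‖_F ≤ ‖G - H‖_F. -/

import Mathlib

/-!
Conjugating by the eigenvector unitary `V`, which preserves the Frobenius norm, reduces to
`G = diag λ`. For PSD `H` the matrix `K = V* H V` is PSD, so its diagonal entries are
nonnegative reals `kᵢ`; the Frobenius distance from `diag λ` to `K` is at least that of the
diagonals, and `|λᵢ - kᵢ| ≥ |λᵢ - max(λᵢ, 0)|` entrywise.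
-/

open Matrix ComplexOrder

section Frobenius

variable {𝕜 : Type*} [RCLike 𝕜] {m n : Type*} [Fintype m] [Fintype n]

theorem Matrix.sum_sq_norm_eq_re_trace (M : Matrix m n 𝕜) :
    ∑ i, ∑ j, ‖M i j‖ ^ 2 = RCLike.re (Mᴴ * M).trace := by
  simp only [trace, diag, mul_apply, conjTranspose_apply, map_sum, RCLike.star_def,
    RCLike.conj_mul, ← RCLike.ofReal_pow, RCLike.ofReal_re]
  exact Finset.sum_comm

variable [DecidableEq n]

theorem Matrix.sum_sq_norm_unitary_conj {U : Matrix n n 𝕜} (hU : U ∈ unitaryGroup n 𝕜)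
    (M : Matrix n n 𝕜) :
    ∑ i, ∑ j, ‖(U * M * star U) i j‖ ^ 2 = ∑ i, ∑ j, ‖M i j‖ ^ 2 := by
  have hUU : star U * U = 1 := mem_unitaryGroup_iff'.mp hU
  have hconj : (U * M * star U)ᴴ * (U * M * star U) = U * (Mᴴ * M) * star U := by
    simp only [← star_eq_conjTranspose, star_mul, star_star, Matrix.mul_assoc]
    rw [← Matrix.mul_assoc (star U) U, hUU, Matrix.one_mul]
  rw [sum_sq_norm_eq_re_trace, sum_sq_norm_eq_re_trace, hconj, trace_mul_cycle,
    ← Matrix.mul_assoc, hUU, Matrix.one_mul]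

theorem Matrix.sum_sq_norm_diagonal (d : n → 𝕜) :
    ∑ i, ∑ j, ‖diagonal d i j‖ ^ 2 = ∑ i, ‖d i‖ ^ 2 := by
  refine Finset.sum_congr rfl fun i _ => ?_
  rw [Finset.sum_eq_single i (fun j _ hj => by simp [diagonal_apply_ne d hj.symm]) (by simp),
    diagonal_apply_eq]

end Frobenius

theorem Matrix.sum_sq_norm_diag_le {α : Type*} [SeminormedAddCommGroup α] {n : Type*}
    [Fintype n] (M : Matrix n n α) :
    ∑ i, ‖M i i‖ ^ 2 ≤ ∑ i, ∑ j, ‖M i j‖ ^ 2 :=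
  Finset.sum_le_sum fun i _ =>
    Finset.single_le_sum (f := fun j => ‖M i j‖ ^ 2) (fun _ _ => by positivity)
      (Finset.mem_univ i)

theorem RCLike.norm_sub_max_zero_le {𝕜 : Type*} [RCLike 𝕜] (a : ℝ) {z : 𝕜} (hz : 0 ≤ z) :
    ‖(a : 𝕜) - (max a 0 : ℝ)‖ ≤ ‖(a : 𝕜) - z‖ := by
  obtain ⟨r, hr, rfl⟩ := RCLike.nonneg_iff_exists_ofReal.mp hz
  simp only [← RCLike.ofReal_sub, RCLike.norm_ofReal]
  rcases le_total a 0 with ha | ha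
  · rw [max_eq_right ha, sub_zero, abs_of_nonpos ha, abs_sub_comm, abs_of_nonneg (by linarith)]
    linarith
  · rw [max_eq_left ha, sub_self, abs_zero]
    exact abs_nonneg _

/-- The PSD part `P(G) = V diag(max(λᵢ,0)) V*` of a Hermitian matrix `G` is
the Frobenius-nearest PSD matrix to `G`: for every PSD `H`,
`‖G - P(G)‖_F ≤ ‖G - H‖_F` (stated via squared Frobenius norms). -/
theorem stmt14 {n : Type*} [Fintype n] [DecidableEq n]
    (G : Matrix n n ℂ) (hG : G.IsHermitian)
    (PG : Matrix n n ℂ)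
    (hPG : PG = (hG.eigenvectorUnitary : Matrix n n ℂ) *
      Matrix.diagonal (fun i => ((max (hG.eigenvalues i) 0 : ℝ) : ℂ)) *
      star (hG.eigenvectorUnitary : Matrix n n ℂ)) :
    ∀ H : Matrix n n ℂ, H.PosSemidef →
      ∑ i, ∑ j, ‖(G - PG) i j‖ ^ 2 ≤ ∑ i, ∑ j, ‖(G - H) i j‖ ^ 2 := by
  intro H hH
  set V : Matrix n n ℂ := (hG.eigenvectorUnitary : Matrix n n ℂ)
  set D : Matrix n n ℂ := diagonal (fun i => (hG.eigenvalues i : ℂ))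
  set K := star V * H * V
  have hV : V ∈ unitaryGroup n ℂ := hG.eigenvectorUnitary.2
  have hG' : G = V * D * star V := hG.spectral_theorem
  have hGPG : G - PG = V * diagonal (fun i =>
      (hG.eigenvalues i : ℂ) - (max (hG.eigenvalues i) 0 : ℝ)) * star V := by
    rw [hPG, ← diagonal_sub, Matrix.mul_sub, Matrix.sub_mul, ← hG']
  have hGH : G - H = V * (D - K) * star V := by
    rw [Matrix.mul_sub, Matrix.sub_mul, ← hG']
    simp only [K, ← Matrix.mul_assoc, mem_unitaryGroup_iff.mp hV, Matrix.one_mul]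
    rw [Matrix.mul_assoc, mem_unitaryGroup_iff.mp hV, Matrix.mul_one]
  have hK : K.PosSemidef := hH.conjTranspose_mul_mul_same V
  rw [hGPG, hGH, sum_sq_norm_unitary_conj hV, sum_sq_norm_unitary_conj hV, sum_sq_norm_diagonal]
  calc ∑ i, ‖(hG.eigenvalues i : ℂ) - (max (hG.eigenvalues i) 0 : ℝ)‖ ^ 2
      ≤ ∑ i, ‖(D - K) i i‖ ^ 2 := Finset.sum_le_sum fun i _ => by
        rw [Matrix.sub_apply, show D i i = hG.eigenvalues i from diagonal_apply_eq _ i]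
        gcongr
        exact RCLike.norm_sub_max_zero_le _ hK.diag_nonneg
    _ ≤ _ := sum_sq_norm_diag_le _
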